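/- Let X be a set, R a commutative unital ring, and 𝒞 a family of subsets of X containing ∅ and closed under finite intersections and finite unions (a lattice of sets). Then F_𝒞(X) has the following universal property: for every (possibly noncommutative, possibly nonunital) associative R-algebra 𝒜 and every family {p_A}_{A∈𝒞} of elements of 𝒜 satisfying p_∅ = 0, p_{A∩B} = p_A p_B, and p_{A∪B} = p_A + p_B − p_{A∩B} for all A, B ∈ 𝒞, there exists a unique (not necessarily unital) R-algebra homomorphism h : F_𝒞(X) → 𝒜 such that h(1_A) = p_A for all A ∈ 𝒞. Equivalently, the universal R-algebra generated by idempotents {p_A}_{A∈𝒞} subject to these relations is isomorphic to F_𝒞(X) via p_A ↦ 1_A. -/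

import Mathlib

set_option maxHeartbeats 1000000


/-- The characteristic function of `A ⊆ X` with values in the ring `R`. -/
noncomputable def charFun {X : Type*} (R : Type*) [CommRing R] (A : Set X) : X → R :=
  A.indicator fun _ => (1 : R)

open scoped Classical


theorem qFun_measure_lt {X : Type*} {L : Finset (Set X)} {B C : Set X}
    (hC : C ∈ L) (hCB : C ⊂ B) :
    (L.filter (fun D => D ⊂ C)).card < (L.filter (fun D => D ⊂ B)).card := by
  refine Finset.card_lt_card ⟨fun D hD => ?_, fun hsub => ?_⟩
  · simp only [Finset.mem_filter] at hD ⊢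
    exact ⟨hD.1, hD.2.trans hCB⟩
  · have := hsub (Finset.mem_filter.mpr ⟨hC, hCB⟩)
    simp only [Finset.mem_filter] at this
    exact ssubset_irrefl _ this.2

noncomputable def qFun {X : Type*} {𝒜 : Type*} [AddCommGroup 𝒜]
    (L : Finset (Set X)) (p : Set X → 𝒜) (B : Set X) : 𝒜 :=
  p B - ∑ C ∈ (L.filter (fun C => C ⊂ B)).attach, qFun L p C.1
termination_by (L.filter (fun C => C ⊂ B)).card
decreasing_by
  have h := C.2
  simp only [Finset.mem_filter] at h
  exact qFun_measure_lt h.1 h.2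

section qlemmas

variable {X : Type*} {𝒜 : Type*} [AddCommGroup 𝒜] (L : Finset (Set X)) (p : Set X → 𝒜)

theorem qFun_spec (B : Set X) :
    p B = qFun L p B + ∑ C ∈ L.filter (fun C => C ⊂ B), qFun L p C := by
  rw [qFun, Finset.sum_attach (L.filter (fun C => C ⊂ B)) (qFun L p)]
  abel

theorem sum_qFun_subsets {B : Set X} (hB : B ∈ L) :
    p B = ∑ C ∈ L.filter (fun C => C ⊆ B), qFun L p C := by
  have hsplit : L.filter (fun C => C ⊆ B) = insert B (L.filter (fun C => C ⊂ B)) := by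
    ext C
    simp only [Finset.mem_filter, Finset.mem_insert]
    constructor
    · rintro ⟨hC, hCB⟩
      rcases eq_or_ssubset_of_subset hCB with h | h
      · exact Or.inl h
      · exact Or.inr ⟨hC, h⟩
    · rintro (rfl | ⟨hC, hCB⟩)
      · exact ⟨hB, subset_rfl⟩
      · exact ⟨hC, hCB.subset⟩
  rw [hsplit, Finset.sum_insert (by simp [ssubset_irrefl]), ← qFun_spec]

theorem qFun_map {𝒜' : Type*} [AddCommGroup 𝒜'] (f : 𝒜 →+ 𝒜') (B : Set X) :
    f (qFun L p B) = qFun L (fun A => f (p A)) B := by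
  suffices h : ∀ (n : ℕ) (B : Set X), (L.filter (fun C => C ⊂ B)).card = n →
      f (qFun L p B) = qFun L (fun A => f (p A)) B from h _ B rfl
  intro n
  induction n using Nat.strong_induction_on with
  | _ n ih =>
    intro B hB
    rw [qFun, qFun, map_sub, map_sum]
    congr 1
    refine Finset.sum_congr rfl fun C _ => ?_
    have h := C.2
    simp only [Finset.mem_filter] at h
    exact ih _ (hB ▸ qFun_measure_lt h.1 h.2) C.1 rfl

end qlemmas

section evalLemma

variable {X : Type*} {L : Finset (Set X)}

theorem mem_finset_inf' {t : Finset (Set X)} (ht : t.Nonempty) {x : X} :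
    x ∈ t.inf' ht id ↔ ∀ C ∈ t, x ∈ C := by
  rw [Finset.inf'_eq_inf, Finset.inf_eq_iInf]
  simp

theorem minimal_unique (hInf : ∀ A ∈ L, ∀ B ∈ L, A ∩ B ∈ L) {x : X} {B B' : Set X}
    (hB : B ∈ L) (hB' : B' ∈ L)
    (h1 : x ∈ B ∧ ∀ C ∈ L, C ⊂ B → x ∉ C)
    (h2 : x ∈ B' ∧ ∀ C ∈ L, C ⊂ B' → x ∉ C) : B = B' := by
  have hmem : B ∩ B' ∈ L := hInf B hB B' hB'
  have hx : x ∈ B ∩ B' := ⟨h1.1, h2.1⟩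
  have e1 : B ∩ B' = B := by
    by_contra h
    exact h1.2 _ hmem (ssubset_of_subset_of_ne Set.inter_subset_left h) hx
  have e2 : B ∩ B' = B' := by
    by_contra h
    exact h2.2 _ hmem (ssubset_of_subset_of_ne Set.inter_subset_right h) hx
  rw [← e1, e2]

theorem qFun_indicator {R : Type*} [CommRing R]
    (hInf : ∀ A ∈ L, ∀ B ∈ L, A ∩ B ∈ L) (x : X) :
    ∀ B ∈ L, qFun L (fun A => if x ∈ A then (1 : R) else 0) B
      = if x ∈ B ∧ ∀ C ∈ L, C ⊂ B → x ∉ C then 1 else 0 := by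
  suffices h : ∀ (n : ℕ), ∀ B ∈ L, (L.filter (fun C => C ⊂ B)).card = n →
      qFun L (fun A => if x ∈ A then (1 : R) else 0) B
      = if x ∈ B ∧ ∀ C ∈ L, C ⊂ B → x ∉ C then 1 else 0 from fun B hB => h _ B hB rfl
  intro n
  induction n using Nat.strong_induction_on with
  | _ n ih =>
    intro B hB hcard
    rw [qFun, Finset.sum_attach (L.filter (fun C => C ⊂ B))
      (qFun L (fun A => if x ∈ A then (1 : R) else 0))]
    have hsum : ∀ C ∈ L.filter (fun C => C ⊂ B),
        qFun L (fun A => if x ∈ A then (1 : R) else 0) C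
          = if x ∈ C ∧ ∀ D ∈ L, D ⊂ C → x ∉ D then 1 else 0 := by
      intro C hC
      simp only [Finset.mem_filter] at hC
      exact ih _ (hcard ▸ qFun_measure_lt hC.1 hC.2) C hC.1 rfl
    rw [Finset.sum_congr rfl hsum]
    by_cases hxB : x ∈ B
    · by_cases hmin : ∀ C ∈ L, C ⊂ B → x ∉ C
      · have : ∀ C ∈ L.filter (fun C => C ⊂ B),
            (if x ∈ C ∧ ∀ D ∈ L, D ⊂ C → x ∉ D then (1 : R) else 0) = 0 := by
          intro C hC
          simp only [Finset.mem_filter] at hC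
          simp only [ite_eq_right_iff]
          rintro ⟨hxC, -⟩
          exact absurd hxC (hmin C hC.1 hC.2)
        rw [Finset.sum_congr rfl this, Finset.sum_const_zero, if_pos hxB,
          if_pos (And.intro hxB hmin), sub_zero]
      · -- there is a smaller element containing x
        push_neg at hmin
        obtain ⟨D, hD, hDB, hxD⟩ := hmin
        set t := L.filter (fun C => x ∈ C ∧ C ⊂ B) with ht_def
        have ht : t.Nonempty := ⟨D, by simp [ht_def, hD, hDB, hxD]⟩
        set m := t.inf' ht id with hm_def
        have hmL : m ∈ L := by
          refine InfClosed.finsetInf'_mem ?_ ht ?_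
          · intro a ha b hb
            exact hInf a ha b hb
          · intro C hC
            simp only [ht_def, Finset.mem_filter] at hC
            exact hC.1
        have hxm : x ∈ m := by
          rw [hm_def, mem_finset_inf' ht]
          intro C hC
          simp only [ht_def, Finset.mem_filter] at hC
          exact hC.2.1
        have hmB : m ⊂ B := lt_of_le_of_lt (Finset.inf'_le id (by simp [ht_def, hD, hDB, hxD]))
          hDB
        have hmmin : ∀ C ∈ L, C ⊂ m → x ∉ C := by
          intro C hC hCm hxC
          have : C ∈ t := by simp [ht_def, hC, hxC, hCm.trans hmB]
          exact hCm.2 (Finset.inf'_le id this)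
        have hone : ∑ C ∈ L.filter (fun C => C ⊂ B),
            (if x ∈ C ∧ ∀ D ∈ L, D ⊂ C → x ∉ D then (1 : R) else 0) = 1 := by
          rw [Finset.sum_eq_single_of_mem m (by simp [Finset.mem_filter, hmL, hmB])]
          · rw [if_pos (And.intro hxm hmmin)]
          · intro C hC hne
            simp only [Finset.mem_filter] at hC
            simp only [ite_eq_right_iff]
            rintro ⟨hxC, hCmin⟩
            exact absurd (minimal_unique hInf hC.1 hmL ⟨hxC, hCmin⟩ ⟨hxm, hmmin⟩) hne
        have hnot : ¬ (x ∈ B ∧ ∀ C ∈ L, C ⊂ B → x ∉ C) := by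
          rintro ⟨-, h⟩; exact h D hD hDB hxD
        rw [hone, if_pos hxB, if_neg hnot, sub_self]
    · have : ∀ C ∈ L.filter (fun C => C ⊂ B),
          (if x ∈ C ∧ ∀ D ∈ L, D ⊂ C → x ∉ D then (1 : R) else 0) = 0 := by
        intro C hC
        simp only [Finset.mem_filter] at hC
        simp only [ite_eq_right_iff]
        rintro ⟨hxC, -⟩
        exact absurd (hC.2.subset hxC) hxB
      rw [Finset.sum_congr rfl this, Finset.sum_const_zero, if_neg hxB,
        if_neg (fun h => hxB h.1), sub_zero]

end evalLemma

section vanish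

variable {X : Type*} {𝒜 : Type*} [AddCommGroup 𝒜]

theorem finsetSup_mem_of {L : Finset (Set X)} (hemptyL : ∅ ∈ L)
    (hU : ∀ A ∈ L, ∀ B ∈ L, A ∪ B ∈ L) {t : Finset (Set X)} (h : ∀ C ∈ t, C ∈ L) :
    t.sup id ∈ L := by
  classical
  induction t using Finset.induction with
  | empty => simpa using hemptyL
  | @insert a t ha ih =>
    rw [Finset.sup_insert]
    exact hU _ (h _ (Finset.mem_insert_self _ _)) _
      (ih fun C hC => h _ (Finset.mem_insert_of_mem hC))

theorem qFun_eq_zero (L : Finset (Set X)) (p : Set X → 𝒜) (hemptyL : ∅ ∈ L)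
    (hInf : ∀ A ∈ L, ∀ B ∈ L, A ∩ B ∈ L) (hU : ∀ A ∈ L, ∀ B ∈ L, A ∪ B ∈ L)
    (hp0 : p ∅ = 0) (hpadd : ∀ A ∈ L, ∀ B ∈ L, p (A ∪ B) = p A + p B - p (A ∩ B)) :
    ∀ B ∈ L, (∀ x ∈ B, ∃ C, C ∈ L ∧ C ⊂ B ∧ x ∈ C) → qFun L p B = 0 := by
  suffices h : ∀ (n : ℕ), ∀ B ∈ L, (L.filter (fun C => C ⊂ B)).card = n →
      (∀ x ∈ B, ∃ C, C ∈ L ∧ C ⊂ B ∧ x ∈ C) → qFun L p B = 0 from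
    fun B hB => h _ B hB rfl
  intro n
  induction n using Nat.strong_induction_on with
  | _ n ih =>
    intro B hB hcard hcover
    by_cases hBne : B = ∅
    · subst hBne
      have hfilter : L.filter (fun C => C ⊂ (∅ : Set X)) = ∅ := by
        refine Finset.filter_false_of_mem fun C hC => ?_
        intro h
        exact h.ne (Set.subset_empty_iff.mp h.subset)
      rw [qFun, hfilter]
      simp [hp0]
    · -- decompose B as a union of two strictly smaller members of L
      set cands := ((L.filter (fun C => C ⊂ B)).powerset).filter (fun T => T.sup id = B)
        with hcands_def
      have hT₀ : (L.filter (fun C => C ⊂ B)) ∈ cands := by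
        simp only [hcands_def, Finset.mem_filter, Finset.mem_powerset]
        refine ⟨subset_rfl, ?_⟩
        apply subset_antisymm
        · refine Finset.sup_le fun C hC => ?_
          simp only [Finset.mem_filter] at hC
          exact hC.2.subset
        · intro x hx
          obtain ⟨C, hCL, hCB, hxC⟩ := hcover x hx
          exact Set.mem_of_mem_of_subset hxC
            (Finset.le_sup (f := id) (Finset.mem_filter.mpr ⟨hCL, hCB⟩))
      obtain ⟨T, hTmem, hTmin⟩ := Finset.exists_min_image cands Finset.card ⟨_, hT₀⟩
      simp only [hcands_def, Finset.mem_filter, Finset.mem_powerset] at hTmem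
      obtain ⟨hTsub, hTsup⟩ := hTmem
      have hTne : T.Nonempty := by
        rcases T.eq_empty_or_nonempty with rfl | h
        · exact absurd (by simpa using hTsup.symm) hBne
        · exact h
      obtain ⟨C, hCT⟩ := hTne
      have hCfil := hTsub hCT
      simp only [Finset.mem_filter] at hCfil
      obtain ⟨hCL, hCB⟩ := hCfil
      set D := (T.erase C).sup id with hD_def
      have hDL : D ∈ L := by
        refine finsetSup_mem_of hemptyL hU fun E hE => ?_
        have := hTsub (Finset.erase_subset _ _ hE)
        simp only [Finset.mem_filter] at this
        exact this.1
      have hBeq : B = C ∪ D := by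
        conv_lhs => rw [← hTsup, ← Finset.insert_erase hCT]
        rw [Finset.sup_insert]
        rfl
      have hDB : D ⊂ B := by
        refine ssubset_of_subset_of_ne ?_ ?_
        · refine Finset.sup_le fun E hE => ?_
          have := hTsub (Finset.erase_subset _ _ hE)
          simp only [Finset.mem_filter] at this
          exact this.2.subset
        · intro h
          have hmem : T.erase C ∈ cands := by
            simp only [hcands_def, Finset.mem_filter, Finset.mem_powerset]
            exact ⟨(Finset.erase_subset _ _).trans hTsub, h⟩
          have := hTmin _ hmem
          have hlt : (T.erase C).card < T.card := Finset.card_erase_lt_of_mem hCT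
          omega
      have hCDL : C ∩ D ∈ L := hInf _ hCL _ hDL
      set FC := L.filter (fun E => E ⊆ C) with hFC_def
      set FD := L.filter (fun E => E ⊆ D) with hFD_def
      set G := L.filter (fun E => E ⊂ B) with hG_def
      have hFCD : FC ∩ FD = L.filter (fun E => E ⊆ C ∩ D) := by
        ext E
        simp only [hFC_def, hFD_def, Finset.mem_inter, Finset.mem_filter,
          Set.subset_inter_iff]
        tauto
      have hsubG : FC ∪ FD ⊆ G := by
        intro E hE
        simp only [hFC_def, hFD_def, hG_def, Finset.mem_union, Finset.mem_filter] at hE ⊢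
        rcases hE with ⟨hEL, hEC⟩ | ⟨hEL, hED⟩
        · exact ⟨hEL, lt_of_le_of_lt hEC hCB⟩
        · exact ⟨hEL, lt_of_le_of_lt hED hDB⟩
      have e1 : qFun L p B = (∑ E ∈ FC, qFun L p E) + (∑ E ∈ FD, qFun L p E)
          - (∑ E ∈ FC ∩ FD, qFun L p E) - ∑ E ∈ G, qFun L p E := by
        have hq : qFun L p B = p B - ∑ E ∈ G, qFun L p E :=
          eq_sub_of_add_eq (qFun_spec L p B).symm
        rw [hq, hBeq, hpadd _ hCL _ hDL, ← sum_qFun_subsets L p hCL,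
          ← sum_qFun_subsets L p hDL, hFCD, ← sum_qFun_subsets L p hCDL]
      have e2 : (∑ E ∈ FC, qFun L p E) + (∑ E ∈ FD, qFun L p E)
          - (∑ E ∈ FC ∩ FD, qFun L p E) = ∑ E ∈ FC ∪ FD, qFun L p E := by
        rw [← Finset.sum_union_inter]
        abel
      have e4 : ∑ E ∈ G \ (FC ∪ FD), qFun L p E = 0 := by
        refine Finset.sum_eq_zero fun E hE => ?_
        simp only [Finset.mem_sdiff, Finset.mem_union, hFC_def, hFD_def, hG_def,
          Finset.mem_filter, not_or, not_and] at hE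
        obtain ⟨⟨hEL, hEB⟩, hnC, hnD⟩ := hE
        have hnEC : ¬ E ⊆ C := hnC hEL
        have hnED : ¬ E ⊆ D := hnD hEL
        refine ih _ (hcard ▸ qFun_measure_lt hEL hEB) E hEL rfl ?_
        intro x hxE
        have hxB : x ∈ B := hEB.subset hxE
        rw [hBeq] at hxB
        rcases hxB with hxC | hxD
        · refine ⟨E ∩ C, hInf _ hEL _ hCL, ?_, hxE, hxC⟩
          refine ssubset_of_subset_of_ne Set.inter_subset_left ?_
          intro h
          exact hnEC (by rw [← h]; exact Set.inter_subset_right)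
        · refine ⟨E ∩ D, hInf _ hEL _ hDL, ?_, hxE, hxD⟩
          refine ssubset_of_subset_of_ne Set.inter_subset_left ?_
          intro h
          exact hnED (by rw [← h]; exact Set.inter_subset_right)
      have e3 : ∑ E ∈ G, qFun L p E
          = ∑ E ∈ G \ (FC ∪ FD), qFun L p E + ∑ E ∈ FC ∪ FD, qFun L p E :=
        (Finset.sum_sdiff hsubG).symm
      rw [e1, e2, e3, e4, zero_add, sub_self]

end vanish

section charfun

variable {X R : Type*} [CommRing R]

theorem charFun_apply (A : Set X) (x : X) :
    charFun R A x = if x ∈ A then (1 : R) else 0 := by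
  simp [charFun, Set.indicator_apply]

theorem charFun_mul (A B : Set X) :
    charFun R A * charFun R B = charFun R (A ∩ B) := by
  funext x
  simp only [Pi.mul_apply, charFun_apply, Set.mem_inter_iff]
  by_cases hA : x ∈ A <;> by_cases hB : x ∈ B <;> simp [hA, hB]

theorem charFun_empty : charFun R (∅ : Set X) = 0 := by
  funext x; simp [charFun_apply]

theorem charFun_union (A B : Set X) :
    charFun R (A ∪ B) = charFun R A + charFun R B - charFun R (A ∩ B) := by
  funext x
  simp only [Pi.sub_apply, Pi.add_apply, charFun_apply, Set.mem_union, Set.mem_inter_iff]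
  by_cases hA : x ∈ A <;> by_cases hB : x ∈ B <;> simp [hA, hB]

end charfun

theorem swap_sum {X R M : Type*} [CommRing R] [AddCommMonoid M] [Module R M]
    (s L : Finset (Set X)) (v : Set X → R) (g : Set X → M) :
    ∑ A ∈ s, v A • ∑ E ∈ L.filter (fun E => E ⊆ A), g E
      = ∑ E ∈ L, (∑ A ∈ s.filter (fun A => E ⊆ A), v A) • g E := by
  simp only [Finset.smul_sum, Finset.sum_filter, smul_ite, smul_zero, Finset.sum_smul,
    ite_smul, zero_smul]
  exact Finset.sum_comm

section latticeHelpers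

variable {X : Type*}

theorem finsetSup_mem_pred {P : Set X → Prop} (h0 : P ∅)
    (hU : ∀ A, P A → ∀ B, P B → P (A ∪ B)) {t : Finset (Set X)} (h : ∀ C ∈ t, P C) :
    P (t.sup id) := by
  classical
  induction t using Finset.induction with
  | empty => simpa using h0
  | @insert a t ha ih =>
    rw [Finset.sup_insert]
    exact hU _ (h _ (Finset.mem_insert_self _ _)) _
      (ih fun C hC => h _ (Finset.mem_insert_of_mem hC))

theorem finsetInf_mem_pred {P : Set X → Prop}
    (hI : ∀ A, P A → ∀ B, P B → P (A ∩ B)) {t : Finset (Set X)} (ht : t.Nonempty)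
    (h : ∀ C ∈ t, P C) : P (t.inf id) := by
  classical
  induction ht using Finset.Nonempty.cons_induction with
  | singleton a => simpa using h a (Finset.mem_singleton_self a)
  | cons a t ha ht ih =>
    rw [Finset.inf_cons]
    exact hI _ (h _ (Finset.mem_cons_self _ _)) _ (ih fun C hC => h _ (Finset.mem_cons_of_mem hC))

theorem mem_finsetSup {t : Finset (Set X)} {x : X} :
    x ∈ t.sup id ↔ ∃ C ∈ t, x ∈ C := by
  rw [Finset.sup_set_eq_biUnion]
  simp

end latticeHelpers

theorem wd_lemma {X R 𝒜 : Type*} [CommRing R] [AddCommGroup 𝒜] [Module R 𝒜]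
    (𝒞 : Set (Set X)) (hempty : ∅ ∈ 𝒞)
    (hinter : ∀ A ∈ 𝒞, ∀ B ∈ 𝒞, A ∩ B ∈ 𝒞)
    (hunion : ∀ A ∈ 𝒞, ∀ B ∈ 𝒞, A ∪ B ∈ 𝒞)
    (p : Set X → 𝒜) (hp0 : p ∅ = 0)
    (hpadd : ∀ A ∈ 𝒞, ∀ B ∈ 𝒞, p (A ∪ B) = p A + p B - p (A ∩ B))
    (v : Set X →₀ R) (hv : v ∈ Finsupp.supported R R 𝒞)
    (hzero : Finsupp.linearCombination R (charFun R) v = 0) :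
    Finsupp.linearCombination R p v = 0 := by
  classical
  set s := v.support with hs_def
  have hs𝒞 : ∀ A ∈ s, A ∈ 𝒞 := fun A hA => hv hA
  -- the finite lattice generated by the support
  set I : Finset (Set X) := (s.powerset.filter (fun T => T.Nonempty)).image (fun T => T.inf id)
    with hI_def
  set L : Finset (Set X) := I.powerset.image (fun T => T.sup id) with hL_def
  have hI𝒞 : ∀ A ∈ I, A ∈ 𝒞 := by
    intro A hA
    simp only [hI_def, Finset.mem_image, Finset.mem_filter, Finset.mem_powerset] at hA
    obtain ⟨T, ⟨hTs, hTne⟩, rfl⟩ := hA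
    exact finsetInf_mem_pred (fun A hA B hB => hinter A hA B hB) hTne
      (fun C hC => hs𝒞 C (hTs hC))
  have hL𝒞 : ∀ B ∈ L, B ∈ 𝒞 := by
    intro B hB
    simp only [hL_def, Finset.mem_image, Finset.mem_powerset] at hB
    obtain ⟨T, hTI, rfl⟩ := hB
    exact finsetSup_mem_pred hempty (fun A hA B hB => hunion A hA B hB)
      (fun C hC => hI𝒞 C (hTI hC))
  have hmemL : ∀ (T : Finset (Set X)), T ⊆ I → T.sup id ∈ L := by
    intro T hT
    simp only [hL_def, Finset.mem_image, Finset.mem_powerset]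
    exact ⟨T, hT, rfl⟩
  have hemptyL : (∅ : Set X) ∈ L := by
    have := hmemL ∅ (Finset.empty_subset I)
    simpa using this
  have hsubL : ∀ A ∈ s, A ∈ L := by
    intro A hA
    have hAI : A ∈ I := by
      simp only [hI_def, Finset.mem_image, Finset.mem_filter, Finset.mem_powerset]
      exact ⟨{A}, ⟨Finset.singleton_subset_iff.mpr hA, Finset.singleton_nonempty A⟩,
        Finset.inf_singleton⟩
    have := hmemL {A} (Finset.singleton_subset_iff.mpr hAI)
    simpa using this
  have hInfL : ∀ A ∈ L, ∀ B ∈ L, A ∩ B ∈ L := by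
    intro A hA B hB
    simp only [hL_def, Finset.mem_image, Finset.mem_powerset] at hA hB
    obtain ⟨T₁, hT₁, rfl⟩ := hA
    obtain ⟨T₂, hT₂, rfl⟩ := hB
    set T₃ : Finset (Set X) := (T₁ ×ˢ T₂).image (fun ab => ab.1 ∩ ab.2) with hT₃_def
    have hT₃I : T₃ ⊆ I := by
      intro E hE
      simp only [hT₃_def, Finset.mem_image, Finset.mem_product] at hE
      obtain ⟨⟨a, b⟩, ⟨haT, hbT⟩, rfl⟩ := hE
      have haI := hT₁ haT
      have hbI := hT₂ hbT
      simp only [hI_def, Finset.mem_image, Finset.mem_filter, Finset.mem_powerset]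
        at haI hbI ⊢
      obtain ⟨Ta, ⟨hTas, hTane⟩, rfl⟩ := haI
      obtain ⟨Tb, ⟨hTbs, hTbne⟩, rfl⟩ := hbI
      exact ⟨Ta ∪ Tb, ⟨Finset.union_subset hTas hTbs, hTane.mono Finset.subset_union_left⟩,
        by rw [Finset.inf_union]; rfl⟩
    have heq : T₁.sup id ∩ T₂.sup id = T₃.sup id := by
      ext x
      simp only [Set.mem_inter_iff, mem_finsetSup, hT₃_def, Finset.mem_image,
        Finset.mem_product]
      constructor
      · rintro ⟨⟨a, haT, hxa⟩, ⟨b, hbT, hxb⟩⟩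
        exact ⟨a ∩ b, ⟨⟨a, b⟩, ⟨haT, hbT⟩, rfl⟩, hxa, hxb⟩
      · rintro ⟨E, ⟨⟨a, b⟩, ⟨haT, hbT⟩, rfl⟩, hxa, hxb⟩
        exact ⟨⟨a, haT, hxa⟩, ⟨b, hbT, hxb⟩⟩
    rw [heq]
    exact hmemL _ hT₃I
  have hUnL : ∀ A ∈ L, ∀ B ∈ L, A ∪ B ∈ L := by
    intro A hA B hB
    simp only [hL_def, Finset.mem_image, Finset.mem_powerset] at hA hB
    obtain ⟨T₁, hT₁, rfl⟩ := hA
    obtain ⟨T₂, hT₂, rfl⟩ := hB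
    have : T₁.sup id ∪ T₂.sup id = (T₁ ∪ T₂).sup id := (Finset.sup_union).symm
    rw [this]
    exact hmemL _ (Finset.union_subset hT₁ hT₂)
  -- coefficients
  set c : Set X → R := fun E => ∑ A ∈ s.filter (fun A => E ⊆ A), v A with hc_def
  have hvchar : ∑ E ∈ L, c E • qFun L (charFun R) E = 0 := by
    rw [← swap_sum s L v (qFun L (charFun R))]
    have : ∀ A ∈ s, v A • ∑ E ∈ L.filter (fun E => E ⊆ A), qFun L (charFun R) E
        = v A • charFun R A := by
      intro A hA
      rw [← sum_qFun_subsets L (charFun R) (hsubL A hA)]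
    rw [Finset.sum_congr rfl this, ← hzero, Finsupp.linearCombination_apply, Finsupp.sum]
  have hvp : Finsupp.linearCombination R p v = ∑ E ∈ L, c E • qFun L p E := by
    rw [← swap_sum s L v (qFun L p)]
    have : ∀ A ∈ s, v A • ∑ E ∈ L.filter (fun E => E ⊆ A), qFun L p E
        = v A • p A := by
      intro A hA
      rw [← sum_qFun_subsets L p (hsubL A hA)]
    rw [Finset.sum_congr rfl this, Finsupp.linearCombination_apply, Finsupp.sum]
  rw [hvp]
  refine Finset.sum_eq_zero fun E hE => ?_
  by_cases hex : ∃ x ∈ E, ∀ C ∈ L, C ⊂ E → x ∉ C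
  · -- in this case the coefficient c E vanishes
    obtain ⟨x, hxE, hxmin⟩ := hex
    have heval : ∀ E' ∈ L, qFun L (charFun R) E' x
        = if x ∈ E' ∧ ∀ C ∈ L, C ⊂ E' → x ∉ C then (1 : R) else 0 := by
      intro E' hE'
      have hmap := qFun_map L (charFun R) (Pi.evalAddMonoidHom (fun _ : X => R) x) E'
      have : (fun A => (Pi.evalAddMonoidHom (fun _ : X => R) x) (charFun R A))
          = fun A => if x ∈ A then (1 : R) else 0 := by
        funext A
        simp [Pi.evalAddMonoidHom, charFun_apply]
      rw [this] at hmap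
      have := qFun_indicator (R := R) hInfL x E' hE'
      rw [← this, ← hmap]
      rfl
    have h0 : ∑ E' ∈ L, c E' * (if x ∈ E' ∧ ∀ C ∈ L, C ⊂ E' → x ∉ C then (1 : R) else 0)
        = 0 := by
      have h1 := congrFun hvchar x
      simp only [Finset.sum_apply, Pi.smul_apply, Pi.zero_apply, smul_eq_mul] at h1
      calc ∑ E' ∈ L, c E' * (if x ∈ E' ∧ ∀ C ∈ L, C ⊂ E' → x ∉ C then (1 : R) else 0)
          = ∑ E' ∈ L, c E' * qFun L (charFun R) E' x :=
            Finset.sum_congr rfl fun E' hE' => by rw [heval E' hE']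
        _ = 0 := h1
    have hcE : c E = 0 := by
      rw [Finset.sum_eq_single_of_mem E hE] at h0
      · rw [if_pos ⟨hxE, hxmin⟩, mul_one] at h0
        exact h0
      · intro E' hE' hne
        have : ¬ (x ∈ E' ∧ ∀ C ∈ L, C ⊂ E' → x ∉ C) := by
          rintro ⟨hxE', hxmin'⟩
          exact hne (minimal_unique hInfL hE' hE ⟨hxE', hxmin'⟩ ⟨hxE, hxmin⟩)
        rw [if_neg this, mul_zero]
    rw [hcE, zero_smul]
  · -- in this case qFun L p E = 0
    push_neg at hex
    have : qFun L p E = 0 := by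
      refine qFun_eq_zero L p hemptyL hInfL hUnL hp0
        (fun A hA B hB => hpadd A (hL𝒞 A hA) B (hL𝒞 B hB)) E hE ?_
      intro x hxE
      obtain ⟨C, hCL, hCE, hxC⟩ := hex x hxE
      exact ⟨C, hCL, hCE, hxC⟩
    rw [this, smul_zero]

noncomputable def interConv {X R : Type*} [CommRing R] (v w : Set X →₀ R) : Set X →₀ R :=
  v.sum fun A a => w.sum fun B b => Finsupp.single (A ∩ B) (a * b)

theorem interConv_mem_supported {X R : Type*} [CommRing R] {𝒞 : Set (Set X)}
    (hinter : ∀ A ∈ 𝒞, ∀ B ∈ 𝒞, A ∩ B ∈ 𝒞) {v w : Set X →₀ R}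
    (hv : v ∈ Finsupp.supported R R 𝒞) (hw : w ∈ Finsupp.supported R R 𝒞) :
    interConv v w ∈ Finsupp.supported R R 𝒞 := by
  classical
  intro E hE
  have h1 := Finsupp.support_sum hE
  simp only [Finset.mem_biUnion] at h1
  obtain ⟨A, hA, h2⟩ := h1
  have h3 := Finsupp.support_sum h2
  simp only [Finset.mem_biUnion] at h3
  obtain ⟨B, hB, h4⟩ := h3
  have h5 := Finsupp.support_single_subset h4
  simp only [Finset.mem_singleton] at h5
  subst h5
  exact hinter A (hv hA) B (hw hB)

theorem linearCombination_interConv {X R 𝒯 : Type*} [CommRing R] [NonUnitalRing 𝒯]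
    [Module R 𝒯] [SMulCommClass R 𝒯 𝒯] [IsScalarTower R 𝒯 𝒯]
    (q : Set X → 𝒯) (v w : Set X →₀ R)
    (hq : ∀ A ∈ v.support, ∀ B ∈ w.support, q (A ∩ B) = q A * q B) :
    Finsupp.linearCombination R q (interConv v w)
      = Finsupp.linearCombination R q v * Finsupp.linearCombination R q w := by
  classical
  rw [interConv, map_finsuppSum]
  rw [Finsupp.linearCombination_apply (v := q) (l := v),
    Finsupp.linearCombination_apply (v := q) (l := w),
    Finsupp.sum, Finsupp.sum, Finsupp.sum, Finset.sum_mul_sum]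
  refine Finset.sum_congr rfl fun A hA => ?_
  rw [map_finsuppSum, Finsupp.sum]
  refine Finset.sum_congr rfl fun B hB => ?_
  rw [Finsupp.linearCombination_single, hq A hA B hB, smul_mul_assoc, mul_smul_comm,
    smul_smul]


/-- `F_𝒞(X)`: the (not necessarily unital) `R`-subalgebra of the `R`-algebra of all
functions `X → R` (pointwise operations) generated by the characteristic functions of
members of `𝒞`. -/
def charSubalgebra (X R : Type*) [CommRing R] (𝒞 : Set (Set X)) :
    NonUnitalSubalgebra R (X → R) :=
  NonUnitalAlgebra.adjoin R {f | ∃ C ∈ 𝒞, f = charFun R C}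


/-- If `𝒞` is a lattice of subsets of `X` (containing `∅`, closed under
finite intersections and finite unions), then `F_𝒞(X)` is the universal `R`-algebra
generated by idempotents `{p_A}_{A ∈ 𝒞}` subject to `p_∅ = 0`, `p_{A∩B} = p_A p_B` and
`p_{A∪B} = p_A + p_B − p_{A∩B}`: for any associative `R`-algebra `𝒜` and any family
`p : 𝒞 → 𝒜` satisfying these relations there is a unique `R`-algebra homomorphism
`h : F_𝒞(X) → 𝒜` with `h(1_A) = p A` for all `A ∈ 𝒞`. -/
theorem charSubalgebra_universal_property
    (X R : Type*) [CommRing R] (𝒞 : Set (Set X))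
    (hempty : ∅ ∈ 𝒞)
    (hinter : ∀ A ∈ 𝒞, ∀ B ∈ 𝒞, A ∩ B ∈ 𝒞)
    (hunion : ∀ A ∈ 𝒞, ∀ B ∈ 𝒞, A ∪ B ∈ 𝒞)
    (𝒜 : Type*) [NonUnitalRing 𝒜] [Module R 𝒜]
    [SMulCommClass R 𝒜 𝒜] [IsScalarTower R 𝒜 𝒜]
    (p : Set X → 𝒜)
    (hp0 : p ∅ = 0)
    (hpmul : ∀ A ∈ 𝒞, ∀ B ∈ 𝒞, p (A ∩ B) = p A * p B)
    (hpadd : ∀ A ∈ 𝒞, ∀ B ∈ 𝒞, p (A ∪ B) = p A + p B - p (A ∩ B)) :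
    ∃! h : charSubalgebra X R 𝒞 →ₙₐ[R] 𝒜,
      ∀ (A : Set X) (hA : A ∈ 𝒞),
        h ⟨charFun R A, NonUnitalAlgebra.subset_adjoin R ⟨A, hA, rfl⟩⟩ = p A := by
  classical
  set G : Set (X → R) := {f | ∃ C ∈ 𝒞, f = charFun R C} with hG_def
  have hGim : G = charFun R '' 𝒞 := by
    ext f
    simp only [hG_def, Set.mem_setOf_eq, Set.mem_image]
    constructor
    · rintro ⟨C, hC, rfl⟩; exact ⟨C, hC, rfl⟩
    · rintro ⟨C, hC, rfl⟩; exact ⟨C, hC, rfl⟩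
  let Gsg : Subsemigroup (X → R) :=
    { carrier := G
      mul_mem' := by
        rintro f g ⟨A, hA, rfl⟩ ⟨B, hB, rfl⟩
        exact ⟨A ∩ B, hinter A hA B hB, charFun_mul A B⟩ }
  have hGclosure : Subsemigroup.closure G = Gsg := Subsemigroup.closure_eq Gsg
  have hspan : (charSubalgebra X R 𝒞).toSubmodule = Submodule.span R G := by
    rw [charSubalgebra, NonUnitalAlgebra.adjoin_eq_span, hGclosure]
    rfl
  set N := Finsupp.supported R R 𝒞 with hN_def
  set φ : (Set X →₀ R) →ₗ[R] (X → R) := Finsupp.linearCombination R (charFun R) with hφ_def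
  set ψ : (Set X →₀ R) →ₗ[R] 𝒜 := Finsupp.linearCombination R p with hψ_def
  set f₁ : N →ₗ[R] (X → R) := φ ∘ₗ N.subtype with hf₁_def
  have hker : LinearMap.ker f₁ ≤ LinearMap.ker (ψ ∘ₗ N.subtype) := by
    intro v hv
    simp only [LinearMap.mem_ker, hf₁_def, LinearMap.comp_apply] at hv ⊢
    exact wd_lemma 𝒞 hempty hinter hunion p hp0 hpadd v.1 v.2 hv
  set h₀ : LinearMap.range f₁ →ₗ[R] 𝒜 :=
    (Submodule.liftQ (R := R) (M := N) (LinearMap.ker f₁) (ψ ∘ₗ N.subtype) hker) ∘ₗ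
      ((LinearMap.quotKerEquivRange (R := R) (M := N) (M₂ := X → R) f₁).symm : LinearMap.range f₁ →ₗ[R] _) with hh₀_def
  have h₀_spec : ∀ (v : N) (hm : f₁ v ∈ LinearMap.range f₁), h₀ ⟨f₁ v, hm⟩ = ψ v.1 := by
    intro v hm
    have he : (⟨f₁ v, hm⟩ : LinearMap.range f₁)
        = f₁.quotKerEquivRange (Submodule.Quotient.mk v) := by
      ext
      rw [LinearMap.quotKerEquivRange_apply_mk]
    rw [hh₀_def, LinearMap.comp_apply, LinearEquiv.coe_coe, he,
      LinearEquiv.symm_apply_apply, Submodule.liftQ_apply, LinearMap.comp_apply,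
      Submodule.subtype_apply]
  have hrange : LinearMap.range f₁ = Submodule.span R G := by
    rw [hGim, hf₁_def, LinearMap.range_comp, Submodule.range_subtype, hφ_def,
      Finsupp.span_image_eq_map_linearCombination]
  have hmem : ∀ z : charSubalgebra X R 𝒞, z.1 ∈ LinearMap.range f₁ := by
    intro z
    rw [hrange, ← hspan]
    exact z.2
  -- representation of elements
  have hrep : ∀ z : charSubalgebra X R 𝒞, ∃ v : N, f₁ v = z.1 := by
    intro z
    exact LinearMap.mem_range.mp (hmem z)
  -- the homomorphism
  set H : charSubalgebra X R 𝒞 →ₙₐ[R] 𝒜 :=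
    { toFun := fun z => h₀ ⟨z.1, hmem z⟩
      map_smul' := by
        intro r x
        have he : (⟨(r • x).1, hmem (r • x)⟩ : LinearMap.range f₁)
            = r • ⟨x.1, hmem x⟩ := rfl
        simp only [he, map_smul, MonoidHom.id_apply]
      map_zero' := by
        have he : (⟨(0 : charSubalgebra X R 𝒞).1, hmem 0⟩ : LinearMap.range f₁) = 0 := rfl
        simp only [he, map_zero]
      map_add' := by
        intro x y
        have he : (⟨(x + y).1, hmem (x + y)⟩ : LinearMap.range f₁)
            = ⟨x.1, hmem x⟩ + ⟨y.1, hmem y⟩ := rfl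
        simp only [he, map_add]
      map_mul' := by
        intro x y
        obtain ⟨v, hv⟩ := hrep x
        obtain ⟨w, hw⟩ := hrep y
        have hvw : v.1 ∈ N := v.2
        have hww : w.1 ∈ N := w.2
        have hu : interConv v.1 w.1 ∈ N := interConv_mem_supported hinter hvw hww
        have hchar : φ (interConv v.1 w.1) = φ v.1 * φ w.1 :=
          linearCombination_interConv (charFun R) v.1 w.1
            (fun A _ B _ => (charFun_mul A B).symm)
        have hψmul : ψ (interConv v.1 w.1) = ψ v.1 * ψ w.1 :=
          linearCombination_interConv p v.1 w.1
            (fun A hA B hB => hpmul A (hvw hA) B (hww hB))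
        have hxy : (x * y).1 = f₁ (⟨interConv v.1 w.1, hu⟩ : N) := by
          show x.1 * y.1 = φ (interConv v.1 w.1)
          rw [hchar, show φ v.1 = x.1 from hv, show φ w.1 = y.1 from hw]
        have e1 : (⟨(x * y).1, hmem (x * y)⟩ : LinearMap.range f₁)
            = ⟨f₁ (⟨interConv v.1 w.1, hu⟩ : N), hxy ▸ hmem (x * y)⟩ := Subtype.ext hxy
        have e2 : (⟨x.1, hmem x⟩ : LinearMap.range f₁)
            = ⟨f₁ v, hv ▸ hmem x⟩ := Subtype.ext hv.symm
        have e3 : (⟨y.1, hmem y⟩ : LinearMap.range f₁)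
            = ⟨f₁ w, hw ▸ hmem y⟩ := Subtype.ext hw.symm
        show h₀ ⟨(x * y).1, hmem (x * y)⟩ = h₀ ⟨x.1, hmem x⟩ * h₀ ⟨y.1, hmem y⟩
        rw [e1, e2, e3, h₀_spec, h₀_spec, h₀_spec, hψmul] } with hH_def
  have HofRep : ∀ (z : charSubalgebra X R 𝒞) (v : N), f₁ v = (z : X → R) → H z = ψ v.1 := by
    intro z v hv
    have h1 : H z = h₀ ⟨z.1, hmem z⟩ := rfl
    have h2 : (⟨z.1, hmem z⟩ : LinearMap.range f₁)
        = ⟨f₁ v, LinearMap.mem_range_self f₁ v⟩ := Subtype.ext hv.symm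
    rw [h1, h2, h₀_spec]
  have Hchar : ∀ (A : Set X) (hA : A ∈ 𝒞),
      H ⟨charFun R A, NonUnitalAlgebra.subset_adjoin R ⟨A, hA, rfl⟩⟩ = p A := by
    intro A hA
    have hmem1 : Finsupp.single A (1 : R) ∈ N := Finsupp.single_mem_supported R 1 hA
    have hA1 : f₁ (⟨Finsupp.single A (1 : R), hmem1⟩ : N) = charFun R A := by
      show φ (Finsupp.single A (1 : R)) = charFun R A
      rw [hφ_def, Finsupp.linearCombination_single, one_smul]
    rw [HofRep _ ⟨Finsupp.single A (1 : R), hmem1⟩ hA1]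
    show ψ (Finsupp.single A (1 : R)) = p A
    rw [hψ_def, Finsupp.linearCombination_single, one_smul]
  refine ⟨H, Hchar, ?_⟩
  intro h' hh'
  refine DFunLike.ext h' H ?_
  rintro ⟨f, hf⟩
  refine NonUnitalAlgebra.adjoin_induction
    (p := fun f hf => h' ⟨f, hf⟩ = H ⟨f, hf⟩) ?_ ?_ ?_ ?_ ?_ hf
  · rintro f ⟨A, hA, rfl⟩
    exact (hh' A hA).trans (Hchar A hA).symm
  · intro x y hx hy ihx ihy
    show h' ⟨x + y, add_mem hx hy⟩ = H ⟨x + y, add_mem hx hy⟩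
    have e : (⟨x + y, add_mem hx hy⟩ : charSubalgebra X R 𝒞)
        = ⟨x, hx⟩ + ⟨y, hy⟩ := rfl
    rw [e, map_add, map_add, ihx, ihy]
  · show h' 0 = H 0
    rw [map_zero, map_zero]
  · intro x y hx hy ihx ihy
    show h' ⟨x * y, mul_mem hx hy⟩ = H ⟨x * y, mul_mem hx hy⟩
    have e : (⟨x * y, mul_mem hx hy⟩ : charSubalgebra X R 𝒞)
        = ⟨x, hx⟩ * ⟨y, hy⟩ := rfl
    rw [e, map_mul, map_mul, ihx, ihy]
  · intro r x hx ihx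
    show h' ⟨r • x, SMulMemClass.smul_mem r hx⟩ = H ⟨r • x, SMulMemClass.smul_mem r hx⟩
    have e : (⟨r • x, SMulMemClass.smul_mem r hx⟩ : charSubalgebra X R 𝒞)
        = r • ⟨x, hx⟩ := rfl
    rw [e, map_smul, map_smul, ihx]
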